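/- (Theorem 3.8: tangential component under a conformal map.) Let σ(s) = Φ(u(s),v(s)) be osculating, i.e. σ = ξσ' + (μ/κ)σ'' for smooth ξ, μ, and let Φ̃ be conformally related to Φ with dilation factor δ. Let a, b ∈ ℝ and consider the tangent vectors T = aΦ_u + bΦ_v and T̃ = aΦ̃_u + bΦ̃_v. With σ̃ = ξ(Φ̃_u u' + Φ̃_v v') + (μ/κ)(Φ̃_u u'' + Φ̃_v v'' + Φ̃_uu u'² + 2Φ̃_uv u'v' + Φ̃_vv v'²), one has σ̃·T̃ − δ²(σ·T) = (μ/2κ)[a(2u'²δδ_uE + 4u'v'δδ_vE + 4v'²δδ_vF − 2v'²δδ_uG) + b(4u'²δδ_uF − 2u'²δδ_vE + 4u'v'δδ_uG + 2v'²δδ_vG)], all quantities on ℝ² evaluated at (u(s),v(s)). -/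

import Mathlib

noncomputable section
open Matrix

/-- Partial derivative in the first (`u`) direction. -/
def pu {E : Type*} [NormedAddCommGroup E] [NormedSpace ℝ E] (f : ℝ × ℝ → E) (p : ℝ × ℝ) : E :=
  fderiv ℝ f p (1, 0)

/-- Partial derivative in the second (`v`) direction. -/
def pv {E : Type*} [NormedAddCommGroup E] [NormedSpace ℝ E] (f : ℝ × ℝ → E) (p : ℝ × ℝ) : E :=
  fderiv ℝ f p (0, 1)

/-- Euclidean norm on `Fin 3 → ℝ`. -/
def enorm3 (x : Fin 3 → ℝ) : ℝ := Real.sqrt (x ⬝ᵥ x)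

variable {V : Type*} [NormedAddCommGroup V] [NormedSpace ℝ V]

lemma contDiff_pu {f : ℝ × ℝ → V} (hf : ContDiff ℝ (⊤ : ℕ∞) f) : ContDiff ℝ (⊤ : ℕ∞) (pu f) :=
  (hf.fderiv_right (by simp)).clm_apply contDiff_const

lemma contDiff_pv {f : ℝ × ℝ → V} (hf : ContDiff ℝ (⊤ : ℕ∞) f) : ContDiff ℝ (⊤ : ℕ∞) (pv f) :=
  (hf.fderiv_right (by simp)).clm_apply contDiff_const

lemma hasDerivAt_comp_curve {f : ℝ × ℝ → V} (hf : ContDiff ℝ (⊤ : ℕ∞) f) {u v : ℝ → ℝ}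
    (hu : ContDiff ℝ (⊤ : ℕ∞) u) (hv : ContDiff ℝ (⊤ : ℕ∞) v) (s : ℝ) :
    HasDerivAt (fun t => f (u t, v t))
      (deriv u s • pu f (u s, v s) + deriv v s • pv f (u s, v s)) s := by
  have hus : HasDerivAt u (deriv u s) s :=
    ((hu.differentiable (by simp)) s).hasDerivAt
  have hvs : HasDerivAt v (deriv v s) s :=
    ((hv.differentiable (by simp)) s).hasDerivAt
  have hγ : HasDerivAt (fun t => (u t, v t)) (deriv u s, deriv v s) s := hus.prodMk hvs
  have hc : HasDerivAt (fun t => f (u t, v t))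
      (fderiv ℝ f (u s, v s) (deriv u s, deriv v s)) s :=
    ((hf.differentiable (by simp)) (u s, v s)).hasFDerivAt.comp_hasDerivAt s hγ
  convert hc using 1
  have h2 : (deriv u s, deriv v s)
      = deriv u s • ((1:ℝ), (0:ℝ)) + deriv v s • ((0:ℝ), (1:ℝ)) := by
    simp [Prod.ext_iff]
  rw [h2, map_add, _root_.map_smul, _root_.map_smul]
  rfl

lemma deriv_comp_curve {f : ℝ × ℝ → V} (hf : ContDiff ℝ (⊤ : ℕ∞) f) {u v : ℝ → ℝ}
    (hu : ContDiff ℝ (⊤ : ℕ∞) u) (hv : ContDiff ℝ (⊤ : ℕ∞) v) (s : ℝ) :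
    deriv (fun t => f (u t, v t)) s
      = deriv u s • pu f (u s, v s) + deriv v s • pv f (u s, v s) :=
  (hasDerivAt_comp_curve hf hu hv s).deriv

lemma contDiff_deriv {u : ℝ → ℝ} (hu : ContDiff ℝ (⊤ : ℕ∞) u) : ContDiff ℝ (⊤ : ℕ∞) (deriv u) := by
  have h := (hu.fderiv_right (m := (⊤ : ℕ∞)) (by simp)).clm_apply
    (contDiff_const (c := (1:ℝ)))
  simpa only [fderiv_apply_one_eq_deriv] using h

lemma pu_pv_symm {f : ℝ × ℝ → V} (hf : ContDiff ℝ (⊤ : ℕ∞) f) (p : ℝ × ℝ) :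
    pu (pv f) p = pv (pu f) p := by
  have hd : Differentiable ℝ (fderiv ℝ f) :=
    (hf.fderiv_right (m := (⊤ : ℕ∞)) (by simp)).differentiable (by simp)
  have h1 : ∀ (w : ℝ × ℝ), fderiv ℝ (fun q => fderiv ℝ f q w) p
      = (fderiv ℝ (fderiv ℝ f) p).flip w := by
    intro w
    have := fderiv_clm_apply (c := fderiv ℝ f) (u := fun _ => w) (hd p)
      (differentiableAt_const w)
    simpa using this
  have hsym : fderiv ℝ (fderiv ℝ f) p (1,0) (0,1) = fderiv ℝ (fderiv ℝ f) p (0,1) (1,0) :=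
    (hf.contDiffAt.isSymmSndFDerivAt (by rw [minSmoothness_of_isRCLikeNormedField]; exact WithTop.coe_le_coe.mpr (le_top : (2 : ℕ∞) ≤ ⊤))) _ _
  show fderiv ℝ (fun q => fderiv ℝ f q (0,1)) p (1,0) = fderiv ℝ (fun q => fderiv ℝ f q (1,0)) p (0,1)
  rw [h1, h1]
  simpa using hsym

lemma deriv2_comp_curve {f : ℝ × ℝ → V} (hf : ContDiff ℝ (⊤ : ℕ∞) f) {u v : ℝ → ℝ}
    (hu : ContDiff ℝ (⊤ : ℕ∞) u) (hv : ContDiff ℝ (⊤ : ℕ∞) v) (s : ℝ) :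
    deriv (deriv (fun t => f (u t, v t))) s
      = deriv (deriv u) s • pu f (u s, v s) + deriv (deriv v) s • pv f (u s, v s)
        + (deriv u s) ^ 2 • pu (pu f) (u s, v s)
        + (2 * deriv u s * deriv v s) • pv (pu f) (u s, v s)
        + (deriv v s) ^ 2 • pv (pv f) (u s, v s) := by
  have h1 : deriv (fun t => f (u t, v t))
      = fun t => deriv u t • pu f (u t, v t) + deriv v t • pv f (u t, v t) :=
    funext fun t => deriv_comp_curve hf hu hv t
  rw [h1]
  have hA := hasDerivAt_comp_curve (contDiff_pu hf) hu hv s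
  have hB := hasDerivAt_comp_curve (contDiff_pv hf) hu hv s
  have hdu : HasDerivAt (deriv u) (deriv (deriv u) s) s :=
    (((contDiff_deriv hu).differentiable (by simp)) s).hasDerivAt
  have hdv : HasDerivAt (deriv v) (deriv (deriv v) s) s :=
    (((contDiff_deriv hv).differentiable (by simp)) s).hasDerivAt
  have h2 := (hdu.fun_smul hA).fun_add (hdv.fun_smul hB)
  rw [h2.deriv, pu_pv_symm hf]
  module

lemma contDiff_dot {f g : ℝ × ℝ → Fin 3 → ℝ} (hf : ContDiff ℝ (⊤ : ℕ∞) f) (hg : ContDiff ℝ (⊤ : ℕ∞) g) :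
    ContDiff ℝ (⊤ : ℕ∞) (fun q => f q ⬝ᵥ g q) := by
  simp only [dotProduct]
  refine ContDiff.sum fun i _ => ContDiff.mul ?_ ?_
  · exact (ContinuousLinearMap.proj (R := ℝ) (φ := fun _ : Fin 3 => ℝ) i).contDiff.comp hf
  · exact (ContinuousLinearMap.proj (R := ℝ) (φ := fun _ : Fin 3 => ℝ) i).contDiff.comp hg

lemma fderiv_dot {f g : ℝ × ℝ → Fin 3 → ℝ} (hf : Differentiable ℝ f)
    (hg : Differentiable ℝ g) (p w : ℝ × ℝ) :
    fderiv ℝ (fun q => f q ⬝ᵥ g q) p w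
      = fderiv ℝ f p w ⬝ᵥ g p + f p ⬝ᵥ fderiv ℝ g p w := by
  have hfi : ∀ i : Fin 3, HasFDerivAt (fun q => f q i)
      ((ContinuousLinearMap.proj i).comp (fderiv ℝ f p)) p := fun i =>
    (ContinuousLinearMap.proj (R := ℝ) (φ := fun _ : Fin 3 => ℝ) i).hasFDerivAt.comp p
      (hf p).hasFDerivAt
  have hgi : ∀ i : Fin 3, HasFDerivAt (fun q => g q i)
      ((ContinuousLinearMap.proj i).comp (fderiv ℝ g p)) p := fun i =>
    (ContinuousLinearMap.proj (R := ℝ) (φ := fun _ : Fin 3 => ℝ) i).hasFDerivAt.comp p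
      (hg p).hasFDerivAt
  have hsum : HasFDerivAt (fun q => f q ⬝ᵥ g q)
      (∑ i : Fin 3, (f p i • (ContinuousLinearMap.proj i).comp (fderiv ℝ g p)
        + g p i • (ContinuousLinearMap.proj i).comp (fderiv ℝ f p))) p := by
    simp only [dotProduct]
    exact HasFDerivAt.fun_sum fun i _ => (hfi i).fun_mul (hgi i)
  rw [hsum.fderiv]
  simp [dotProduct, ContinuousLinearMap.sum_apply, Finset.sum_add_distrib, mul_comm]
  ring

lemma pu_dot {f g : ℝ × ℝ → Fin 3 → ℝ} (hf : ContDiff ℝ (⊤ : ℕ∞) f) (hg : ContDiff ℝ (⊤ : ℕ∞) g) (p : ℝ × ℝ) :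
    pu (fun q => f q ⬝ᵥ g q) p = pu f p ⬝ᵥ g p + f p ⬝ᵥ pu g p :=
  fderiv_dot (hf.differentiable (by simp)) (hg.differentiable (by simp)) p _

lemma pv_dot {f g : ℝ × ℝ → Fin 3 → ℝ} (hf : ContDiff ℝ (⊤ : ℕ∞) f) (hg : ContDiff ℝ (⊤ : ℕ∞) g) (p : ℝ × ℝ) :
    pv (fun q => f q ⬝ᵥ g q) p = pv f p ⬝ᵥ g p + f p ⬝ᵥ pv g p :=
  fderiv_dot (hf.differentiable (by simp)) (hg.differentiable (by simp)) p _

lemma pu_mul {a b : ℝ × ℝ → ℝ} (ha : Differentiable ℝ a) (hb : Differentiable ℝ b) (p : ℝ × ℝ) :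
    pu (fun q => a q * b q) p = a p * pu b p + b p * pu a p := by
  unfold pu
  rw [fderiv_fun_mul (ha p) (hb p)]
  simp

lemma pv_mul {a b : ℝ × ℝ → ℝ} (ha : Differentiable ℝ a) (hb : Differentiable ℝ b) (p : ℝ × ℝ) :
    pv (fun q => a q * b q) p = a p * pv b p + b p * pv a p := by
  unfold pv
  rw [fderiv_fun_mul (ha p) (hb p)]
  simp

section dots
variable {Φ : ℝ × ℝ → Fin 3 → ℝ} (hΦ : ContDiff ℝ (⊤ : ℕ∞) Φ) {E F G : ℝ × ℝ → ℝ}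
include hΦ

lemma dot_uu_u (hE : ∀ p, E p = pu Φ p ⬝ᵥ pu Φ p) (q : ℝ × ℝ) :
    pu (pu Φ) q ⬝ᵥ pu Φ q = pu E q / 2 := by
  have hEf : E = fun p => pu Φ p ⬝ᵥ pu Φ p := funext hE
  have h := pu_dot (contDiff_pu hΦ) (contDiff_pu hΦ) q
  have hc : pu Φ q ⬝ᵥ pu (pu Φ) q = pu (pu Φ) q ⬝ᵥ pu Φ q := dotProduct_comm _ _
  rw [hEf, h, hc]; ring

lemma dot_vu_u (hE : ∀ p, E p = pu Φ p ⬝ᵥ pu Φ p) (q : ℝ × ℝ) :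
    pv (pu Φ) q ⬝ᵥ pu Φ q = pv E q / 2 := by
  have hEf : E = fun p => pu Φ p ⬝ᵥ pu Φ p := funext hE
  have h := pv_dot (contDiff_pu hΦ) (contDiff_pu hΦ) q
  have hc : pu Φ q ⬝ᵥ pv (pu Φ) q = pv (pu Φ) q ⬝ᵥ pu Φ q := dotProduct_comm _ _
  rw [hEf, h, hc]; ring

lemma dot_uu_v (hE : ∀ p, E p = pu Φ p ⬝ᵥ pu Φ p)
    (hF : ∀ p, F p = pu Φ p ⬝ᵥ pv Φ p) (q : ℝ × ℝ) :
    pu (pu Φ) q ⬝ᵥ pv Φ q = pu F q - pv E q / 2 := by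
  have hFf : F = fun p => pu Φ p ⬝ᵥ pv Φ p := funext hF
  have h := pu_dot (contDiff_pu hΦ) (contDiff_pv hΦ) q
  rw [pu_pv_symm hΦ] at h
  have hc : pu Φ q ⬝ᵥ pv (pu Φ) q = pv (pu Φ) q ⬝ᵥ pu Φ q := dotProduct_comm _ _
  have h2 := dot_vu_u hΦ hE q
  rw [hFf, h, hc, h2]; ring

lemma dot_vu_v (hG : ∀ p, G p = pv Φ p ⬝ᵥ pv Φ p) (q : ℝ × ℝ) :
    pv (pu Φ) q ⬝ᵥ pv Φ q = pu G q / 2 := by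
  have hGf : G = fun p => pv Φ p ⬝ᵥ pv Φ p := funext hG
  have h := pu_dot (contDiff_pv hΦ) (contDiff_pv hΦ) q
  rw [pu_pv_symm hΦ] at h
  have hc : pv Φ q ⬝ᵥ pv (pu Φ) q = pv (pu Φ) q ⬝ᵥ pv Φ q := dotProduct_comm _ _
  rw [hGf, h, hc]; ring

lemma dot_vv_u (hF : ∀ p, F p = pu Φ p ⬝ᵥ pv Φ p)
    (hG : ∀ p, G p = pv Φ p ⬝ᵥ pv Φ p) (q : ℝ × ℝ) :
    pv (pv Φ) q ⬝ᵥ pu Φ q = pv F q - pu G q / 2 := by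
  have hFf : F = fun p => pu Φ p ⬝ᵥ pv Φ p := funext hF
  have h := pv_dot (contDiff_pu hΦ) (contDiff_pv hΦ) q
  have hc : pu Φ q ⬝ᵥ pv (pv Φ) q = pv (pv Φ) q ⬝ᵥ pu Φ q := dotProduct_comm _ _
  have h2 := dot_vu_v hΦ hG q
  rw [hFf, h, hc, h2]; ring

lemma dot_vv_v (hG : ∀ p, G p = pv Φ p ⬝ᵥ pv Φ p) (q : ℝ × ℝ) :
    pv (pv Φ) q ⬝ᵥ pv Φ q = pv G q / 2 := by
  have hGf : G = fun p => pv Φ p ⬝ᵥ pv Φ p := funext hG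
  have h := pv_dot (contDiff_pv hΦ) (contDiff_pv hΦ) q
  have hc : pv Φ q ⬝ᵥ pv (pv Φ) q = pv (pv Φ) q ⬝ᵥ pv Φ q := dotProduct_comm _ _
  rw [hGf, h, hc]; ring

end dots

lemma pu_conf {δ E Et : ℝ × ℝ → ℝ} (hδ : ContDiff ℝ (⊤ : ℕ∞) δ) (hEc : ContDiff ℝ (⊤ : ℕ∞) E)
    (hc : ∀ p, Et p = δ p ^ 2 * E p) (q : ℝ × ℝ) :
    pu Et q = δ q ^ 2 * pu E q + 2 * δ q * pu δ q * E q := by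
  have hf : Et = fun p => (δ p * δ p) * E p := by
    funext p; rw [hc p]; ring
  rw [hf, pu_mul ((hδ.differentiable (by simp)).fun_mul (hδ.differentiable (by simp)))
      (hEc.differentiable (by simp)),
    pu_mul (hδ.differentiable (by simp)) (hδ.differentiable (by simp))]
  ring

lemma pv_conf {δ E Et : ℝ × ℝ → ℝ} (hδ : ContDiff ℝ (⊤ : ℕ∞) δ) (hEc : ContDiff ℝ (⊤ : ℕ∞) E)
    (hc : ∀ p, Et p = δ p ^ 2 * E p) (q : ℝ × ℝ) :
    pv Et q = δ q ^ 2 * pv E q + 2 * δ q * pv δ q * E q := by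
  have hf : Et = fun p => (δ p * δ p) * E p := by
    funext p; rw [hc p]; ring
  rw [hf, pv_mul ((hδ.differentiable (by simp)).fun_mul (hδ.differentiable (by simp)))
      (hEc.differentiable (by simp)),
    pv_mul (hδ.differentiable (by simp)) (hδ.differentiable (by simp))]
  ring

set_option maxHeartbeats 2000000 in
theorem tangential_component_under_conformal_map
    (Φ : ℝ × ℝ → Fin 3 → ℝ) (hΦ : ContDiff ℝ (⊤ : ℕ∞) Φ)
    (hreg : ∀ p, crossProduct (pu Φ p) (pv Φ p) ≠ 0)
    (E F G : ℝ × ℝ → ℝ)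
    (hE : ∀ p, E p = pu Φ p ⬝ᵥ pu Φ p) (hF : ∀ p, F p = pu Φ p ⬝ᵥ pv Φ p)
    (hG : ∀ p, G p = pv Φ p ⬝ᵥ pv Φ p)
    (Φt : ℝ × ℝ → Fin 3 → ℝ) (hΦt : ContDiff ℝ (⊤ : ℕ∞) Φt)
    (hregt : ∀ p, crossProduct (pu Φt p) (pv Φt p) ≠ 0)
    (Et Ft Gt : ℝ × ℝ → ℝ)
    (hEt : ∀ p, Et p = pu Φt p ⬝ᵥ pu Φt p) (hFt : ∀ p, Ft p = pu Φt p ⬝ᵥ pv Φt p)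
    (hGt : ∀ p, Gt p = pv Φt p ⬝ᵥ pv Φt p)
    (δ : ℝ × ℝ → ℝ) (hδ : ContDiff ℝ (⊤ : ℕ∞) δ) (hδpos : ∀ p, 0 < δ p)
    (hcE : ∀ p, Et p = δ p ^ 2 * E p) (hcF : ∀ p, Ft p = δ p ^ 2 * F p)
    (hcG : ∀ p, Gt p = δ p ^ 2 * G p)
    (u v : ℝ → ℝ) (hu : ContDiff ℝ (⊤ : ℕ∞) u) (hv : ContDiff ℝ (⊤ : ℕ∞) v)
    (σ : ℝ → Fin 3 → ℝ) (hσ : ∀ s, σ s = Φ (u s, v s))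
    (hunit : ∀ s, enorm3 (deriv σ s) = 1)
    (κ : ℝ → ℝ) (hκ : ∀ s, κ s = enorm3 (deriv (deriv σ) s)) (hκ0 : ∀ s, κ s ≠ 0)
    (ξ μ : ℝ → ℝ) (hξ : ContDiff ℝ (⊤ : ℕ∞) ξ) (hμ : ContDiff ℝ (⊤ : ℕ∞) μ)
    (hosc : ∀ s, σ s = ξ s • deriv σ s + (μ s / κ s) • deriv (deriv σ) s)
    (σt : ℝ → Fin 3 → ℝ)
    (hσt : ∀ s, σt s =
      ξ s • (deriv u s • pu Φt (u s, v s) + deriv v s • pv Φt (u s, v s)) +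
      (μ s / κ s) •
        (deriv (deriv u) s • pu Φt (u s, v s) + deriv (deriv v) s • pv Φt (u s, v s) +
         (deriv u s) ^ 2 • pu (pu Φt) (u s, v s) +
         (2 * deriv u s * deriv v s) • pv (pu Φt) (u s, v s) +
         (deriv v s) ^ 2 • pv (pv Φt) (u s, v s)))
    :
    ∀ (a b : ℝ) (s : ℝ),
      σt s ⬝ᵥ (a • pu Φt (u s, v s) + b • pv Φt (u s, v s)) -
          δ (u s, v s) ^ 2 * (σ s ⬝ᵥ (a • pu Φ (u s, v s) + b • pv Φ (u s, v s))) =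
        (μ s / (2 * κ s)) *
          (a * (2 * (deriv u s) ^ 2 * δ (u s, v s) * pu δ (u s, v s) * E (u s, v s) +
                4 * deriv u s * deriv v s * δ (u s, v s) * pv δ (u s, v s) * E (u s, v s) +
                4 * (deriv v s) ^ 2 * δ (u s, v s) * pv δ (u s, v s) * F (u s, v s) -
                2 * (deriv v s) ^ 2 * δ (u s, v s) * pu δ (u s, v s) * G (u s, v s)) +
           b * (4 * (deriv u s) ^ 2 * δ (u s, v s) * pu δ (u s, v s) * F (u s, v s) -
                2 * (deriv u s) ^ 2 * δ (u s, v s) * pv δ (u s, v s) * E (u s, v s) +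
                4 * deriv u s * deriv v s * δ (u s, v s) * pu δ (u s, v s) * G (u s, v s) +
                2 * (deriv v s) ^ 2 * δ (u s, v s) * pv δ (u s, v s) * G (u s, v s))) := by
  intro a b s
  have hκs := hκ0 s
  set q : ℝ × ℝ := (u s, v s) with hq
  -- smoothness facts
  have hEc : ContDiff ℝ (⊤ : ℕ∞) E := by
    rw [funext hE]; exact contDiff_dot (contDiff_pu hΦ) (contDiff_pu hΦ)
  have hFc : ContDiff ℝ (⊤ : ℕ∞) F := by
    rw [funext hF]; exact contDiff_dot (contDiff_pu hΦ) (contDiff_pv hΦ)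
  have hGc : ContDiff ℝ (⊤ : ℕ∞) G := by
    rw [funext hG]; exact contDiff_dot (contDiff_pv hΦ) (contDiff_pv hΦ)
  -- derivatives of σ
  have hσf : σ = fun t => Φ (u t, v t) := funext hσ
  have hd1 : deriv σ s = deriv u s • pu Φ q + deriv v s • pv Φ q := by
    rw [hσf]; exact deriv_comp_curve hΦ hu hv s
  have hd2 : deriv (deriv σ) s
      = deriv (deriv u) s • pu Φ q + deriv (deriv v) s • pv Φ q
        + (deriv u s) ^ 2 • pu (pu Φ) q
        + (2 * deriv u s * deriv v s) • pv (pu Φ) q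
        + (deriv v s) ^ 2 • pv (pv Φ) q := by
    rw [hσf]; exact deriv2_comp_curve hΦ hu hv s
  -- dot product values, base surface
  have A1 : pu Φ q ⬝ᵥ pu Φ q = E q := (hE q).symm
  have A2 : pu Φ q ⬝ᵥ pv Φ q = F q := (hF q).symm
  have A3 : pv Φ q ⬝ᵥ pu Φ q = F q := by rw [dotProduct_comm]; exact (hF q).symm
  have A4 : pv Φ q ⬝ᵥ pv Φ q = G q := (hG q).symm
  have B1 := dot_uu_u hΦ hE q
  have B2 := dot_vu_u hΦ hE q
  have B3 := dot_uu_v hΦ hE hF q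
  have B4 := dot_vu_v hΦ hG q
  have B5 := dot_vv_u hΦ hF hG q
  have B6 := dot_vv_v hΦ hG q
  -- dot product values, tilde surface
  have T1 : pu Φt q ⬝ᵥ pu Φt q = δ q ^ 2 * E q := by rw [← hEt q]; exact hcE q
  have T2 : pu Φt q ⬝ᵥ pv Φt q = δ q ^ 2 * F q := by rw [← hFt q]; exact hcF q
  have T3 : pv Φt q ⬝ᵥ pu Φt q = δ q ^ 2 * F q := by
    rw [dotProduct_comm, ← hFt q]; exact hcF q
  have T4 : pv Φt q ⬝ᵥ pv Φt q = δ q ^ 2 * G q := by rw [← hGt q]; exact hcG q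
  have C1 := dot_uu_u hΦt hEt q
  have C2 := dot_vu_u hΦt hEt q
  have C3 := dot_uu_v hΦt hEt hFt q
  have C4 := dot_vu_v hΦt hGt q
  have C5 := dot_vv_u hΦt hFt hGt q
  have C6 := dot_vv_v hΦt hGt q
  have P1 := pu_conf hδ hEc hcE q
  have P2 := pv_conf hδ hEc hcE q
  have P3 := pu_conf hδ hFc hcF q
  have P4 := pv_conf hδ hFc hcF q
  have P5 := pu_conf hδ hGc hcG q
  have P6 := pv_conf hδ hGc hcG q
  simp only [P1, P2, P3, P4, P5, P6] at C1 C2 C3 C4 C5 C6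
  -- expand the goal
  rw [hσt s, hosc s, hd1, hd2]
  simp only [smul_add, add_dotProduct, smul_dotProduct, dotProduct_add, dotProduct_smul,
    smul_eq_mul]
  rw [A1, A2, A3, A4, B1, B2, B3, B4, B5, B6, T1, T2, T3, T4, C1, C2, C3, C4, C5, C6]
  field_simp
  ring
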